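/- Let W be a finite Coxeter group. For any u, w ∈ W one has u (u⁻¹ ↓ U_w) ≤ w in the strong Bruhat order. -/

import Mathlib

open Polynomial

namespace PaperBase

variable {B : Type*} {W : Type*} [Group W] {M : CoxeterMatrix B} (cs : CoxeterSystem M W)

/-- The strong Bruhat order: `u ≤ w` iff some reduced word for `w` has a sublist that is a
reduced word for `u`. -/
def BruhatLE (u w : W) : Prop :=
  ∃ ω : List B, cs.IsReduced ω ∧ cs.wordProd ω = w ∧
    ∃ ω' : List B, ω'.Sublist ω ∧ cs.IsReduced ω' ∧ cs.wordProd ω' = u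

/-- The strict strong Bruhat order. -/
def BruhatLT (u w : W) : Prop := BruhatLE cs u w ∧ u ≠ w

/-- The right weak Bruhat order: `u ≤_R w` iff `ℓ(w) = ℓ(u) + ℓ(u⁻¹ w)`. -/
def RWeakLE (u w : W) : Prop := cs.length w = cs.length u + cs.length (u⁻¹ * w)

/-- `U_ω ↑ v` along a word `ω`. -/
noncomputable def upLWord (ω : List B) (v : W) : W :=
  ω.foldr (fun i x => if cs.length x < cs.length (cs.simple i * x) then cs.simple i * x else x) v

/-- `U_ω ↓ v` along a word `ω`. -/
noncomputable def downLWord (ω : List B) (v : W) : W :=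
  ω.foldr (fun i x => if cs.length (cs.simple i * x) < cs.length x then cs.simple i * x else x) v

/-- `v ↑ U_ω` along a word `ω`. -/
noncomputable def upRWord (v : W) (ω : List B) : W :=
  ω.foldl (fun x i => if cs.length x < cs.length (x * cs.simple i) then x * cs.simple i else x) v

/-- `v ↓ U_ω` along a word `ω`. -/
noncomputable def downRWord (v : W) (ω : List B) : W :=
  ω.foldl (fun x i => if cs.length (x * cs.simple i) < cs.length x then x * cs.simple i else x) v

/-- A chosen reduced word for `w`. -/
noncomputable def rword (w : W) : List B := (cs.exists_reduced_word' w).choose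

theorem rword_isReduced (w : W) : cs.IsReduced (rword cs w) :=
  (cs.exists_reduced_word' w).choose_spec.1

theorem rword_wordProd (w : W) : cs.wordProd (rword cs w) = w :=
  ((cs.exists_reduced_word' w).choose_spec.2).symm

/-- `U_w ↑ v` for `w : W`, computed along a chosen reduced word for `w`. -/
noncomputable def upL (w v : W) : W := upLWord cs (rword cs w) v

/-- `U_w ↓ v` for `w : W`. -/
noncomputable def downL (w v : W) : W := downLWord cs (rword cs w) v

/-- `v ↑ U_w` for `w : W`. -/
noncomputable def upR (v w : W) : W := upRWord cs v (rword cs w)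

/-- `v ↓ U_w` for `w : W`. -/
noncomputable def downR (v w : W) : W := downRWord cs v (rword cs w)

/-- The Demazure (0-Hecke) product `u ∘ w`. -/
noncomputable def dem (u w : W) : W := upRWord cs u (rword cs w)

/-- Left multiplication by the Hecke algebra generator `T_{s i}` on the free
`ℤ[q]`-module with basis `{T_w}`, realized as `W →₀ ℤ[q]`:
`T_s T_w = T_{sw}` if `sw > w`, and `T_s T_w = (q-1) T_w + q T_{sw}` if `sw < w`. -/
noncomputable def heckeMulSimple (i : B) (f : W →₀ Polynomial ℤ) : W →₀ Polynomial ℤ :=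
  f.sum fun w c =>
    if cs.length w < cs.length (cs.simple i * w)
    then Finsupp.single (cs.simple i * w) c
    else Finsupp.single w ((X - 1) * c) + Finsupp.single (cs.simple i * w) (X * c)

/-- Left multiplication by `T_{π ω}` along a word `ω`. -/
noncomputable def heckeMulWord (ω : List B) (f : W →₀ Polynomial ℤ) : W →₀ Polynomial ℤ :=
  ω.foldr (heckeMulSimple cs) f

/-- The product `T_x T_y` in the Hecke algebra, expanded in the basis `{T_w}`. -/
noncomputable def TT (x y : W) : W →₀ Polynomial ℤ :=
  heckeMulWord cs (rword cs x) (Finsupp.single y 1)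

open Classical in
/-- The linear functional `Λ_w` with `Λ_w (T_y) = q^{ℓ(y)}` if `y ≤ w`, else `0`. -/
noncomputable def Lam (w : W) (f : W →₀ Polynomial ℤ) : Polynomial ℤ :=
  f.sum fun y c => if BruhatLE cs y w then X ^ cs.length y * c else 0

/-- `Θ(x, y, w) = Λ_w (T_x T_{y⁻¹})`. -/
noncomputable def Theta (x y w : W) : Polynomial ℤ := Lam cs w (TT cs x y⁻¹)


section ExchangeTheory

open CoxeterSystem List

private lemma hkey (i i' : B) (a : ℕ) :
    cs.simple i' * (cs.simple i * cs.simple i') ^ a =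
      ((cs.simple i * cs.simple i') ^ a)⁻¹ * cs.simple i' := by
  induction a with
  | zero => simp
  | succ n ih =>
      rw [pow_succ', ← mul_assoc, show cs.simple i' * (cs.simple i * cs.simple i') =
        (cs.simple i * cs.simple i')⁻¹ * cs.simple i' by simp [mul_assoc], mul_assoc, ih,
        ← mul_assoc, ← mul_inv_rev, ← pow_succ, ← pow_succ']

private lemma wp_alt_odd (i i' : B) (n : ℕ) :
    (cs.wordProd (alternatingWord i i' n))⁻¹ * cs.wordProd (alternatingWord i i' (n + 1)) =
      cs.wordProd (alternatingWord i i' (2 * n + 1)) := by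
  rcases Nat.even_or_odd n with he | ho
  · obtain ⟨a, rfl⟩ := he
    rw [cs.prod_alternatingWord_eq_mul_pow, cs.prod_alternatingWord_eq_mul_pow,
      cs.prod_alternatingWord_eq_mul_pow]
    have h1 : Even (a + a) := ⟨a, rfl⟩
    have h2 : ¬ Even (a + a + 1) := by simp [Nat.even_add_one, h1]
    have h3 : ¬ Even (2 * (a + a) + 1) := by simp [Nat.even_add_one]
    rw [if_pos h1, if_neg h2, if_neg h3]
    have e1 : (a + a) / 2 = a := by omega
    have e2 : (a + a + 1) / 2 = a := by omega
    have e3 : (2 * (a + a) + 1) / 2 = a + a := by omega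
    rw [e1, e2, e3]
    rw [one_mul, ← mul_assoc, show ((cs.simple i * cs.simple i') ^ a)⁻¹ * cs.simple i'
      = cs.simple i' * (cs.simple i * cs.simple i') ^ a from (hkey cs i i' a).symm,
      mul_assoc, ← pow_add]
  · obtain ⟨a, rfl⟩ := ho
    rw [cs.prod_alternatingWord_eq_mul_pow, cs.prod_alternatingWord_eq_mul_pow,
      cs.prod_alternatingWord_eq_mul_pow]
    have h1 : ¬ Even (2 * a + 1) := by simp [Nat.even_add_one]
    have h2 : Even (2 * a + 1 + 1) := ⟨a + 1, by ring⟩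
    have h3 : ¬ Even (2 * (2 * a + 1) + 1) := by simp [Nat.even_add_one]
    rw [if_neg h1, if_pos h2, if_neg h3]
    have e1 : (2 * a + 1) / 2 = a := by omega
    have e2 : (2 * a + 1 + 1) / 2 = a + 1 := by omega
    have e3 : (2 * (2 * a + 1) + 1) / 2 = 2 * a + 1 := by omega
    rw [e1, e2, e3]
    rw [mul_inv_rev, cs.inv_simple, one_mul, show ((cs.simple i * cs.simple i') ^ a)⁻¹ *
      cs.simple i' = cs.simple i' * (cs.simple i * cs.simple i') ^ a from (hkey cs i i' a).symm,
      mul_assoc, ← pow_add, show a + (a + 1) = 2 * a + 1 by ring]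

private lemma wp_alt_period (i i' : B) (L : ℕ) :
    cs.wordProd (alternatingWord i i' (L + 2 * M i i')) =
      cs.wordProd (alternatingWord i i' L) := by
  rw [cs.prod_alternatingWord_eq_mul_pow, cs.prod_alternatingWord_eq_mul_pow]
  have h1 : Even (L + 2 * M i i') ↔ Even L := by simp [Nat.even_add]
  have h2 : (L + 2 * M i i') / 2 = L / 2 + M i i' := by omega
  rw [h2, pow_add, cs.simple_mul_simple_pow, mul_one]
  by_cases h : Even L
  · rw [if_pos (h1.mpr h), if_pos h]
  · rw [if_neg (fun hh => h (h1.mp hh)), if_neg h]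

private lemma ris_alt (i i' : B) (m : ℕ) :
    cs.rightInvSeq (alternatingWord i i' m) =
      ((List.range m).reverse).map (fun n => cs.wordProd (alternatingWord i i' (2 * n + 1))) := by
  induction m with
  | zero => simp [alternatingWord]
  | succ n ih =>
      rw [alternatingWord_succ', CoxeterSystem.rightInvSeq, ih, List.range_succ]
      simp only [List.reverse_append, List.reverse_singleton, List.map_cons, List.singleton_append,
        List.map]
      congr 1
      rw [mul_assoc, ← cs.wordProd_cons, ← alternatingWord_succ', wp_alt_odd]

private lemma even_count_ris_alt [DecidableEq W] (i i' : B) (t : W) :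
    Even (List.count t (cs.rightInvSeq (alternatingWord i i' (2 * M i i')))) := by
  rw [ris_alt, List.map_reverse, List.count_reverse, two_mul, List.range_add, List.map_append,
    List.count_append]
  have : (List.map (fun n => cs.wordProd (alternatingWord i i' (2 * n + 1)))
      (List.map (fun n => M i i' + n) (List.range (M i i')))) =
      (List.map (fun n => cs.wordProd (alternatingWord i i' (2 * n + 1)))
        (List.range (M i i'))) := by
    rw [List.map_map]
    apply List.map_congr_left
    intro a _
    show cs.wordProd (alternatingWord i i' (2 * (M i i' + a) + 1)) = _
    rw [show 2 * (M i i' + a) + 1 = (2 * a + 1) + 2 * M i i' by ring, wp_alt_period]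
  rw [this]
  exact ⟨_, rfl⟩

open Classical in
/-- The permutation of `W × ℤˣ` associated to a simple reflection, used to build the
standard sign representation of a Coxeter group on reflections. -/
private noncomputable def sgnPerm (i : B) : Equiv.Perm (W × ℤˣ) :=
  Function.Involutive.toPerm
    (fun p => (cs.simple i * p.1 * cs.simple i, if p.1 = cs.simple i then -p.2 else p.2))
    (by
      rintro ⟨t, e⟩
      have h1 : ∀ x : W, cs.simple i * (cs.simple i * x * cs.simple i) * cs.simple i = x := by
        intro x
        simp [mul_assoc, cs.simple_mul_simple_cancel_left]
      have h2 : (cs.simple i * t * cs.simple i = cs.simple i) ↔ t = cs.simple i := by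
        constructor
        · intro h
          have h' : cs.simple i * t * cs.simple i = 1 * cs.simple i := by rwa [one_mul]
          have h'' := mul_right_cancel h'
          have := eq_inv_of_mul_eq_one_right h''
          rwa [cs.inv_simple] at this
        · rintro rfl
          rw [cs.simple_mul_simple_self, one_mul]
      simp only [Prod.mk.injEq, h1]
      refine ⟨trivial, ?_⟩
      by_cases ht : t = cs.simple i
      · rw [if_pos (h2.mpr ht), if_pos ht, neg_neg]
      · rw [if_neg (fun h => ht (h2.mp h)), if_neg ht])

open Classical in
private lemma sgnPerm_apply (i : B) (t : W) (e : ℤˣ) :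
    sgnPerm cs i (t, e) = (cs.simple i * t * cs.simple i, if t = cs.simple i then -e else e) :=
  rfl

private lemma prod_sgnPerm_apply [DecidableEq W] (ω : List B) (t : W) (e : ℤˣ) :
    (ω.map (sgnPerm cs)).prod (t, e) =
      (cs.wordProd ω * t * (cs.wordProd ω)⁻¹,
        e * (-1) ^ ((cs.rightInvSeq ω).count t)) := by
  induction ω with
  | nil => simp
  | cons j ω ih =>
      rw [List.map_cons, List.prod_cons, Equiv.Perm.mul_apply, ih, sgnPerm_apply,
        CoxeterSystem.rightInvSeq, List.count_cons, cs.wordProd_cons]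
      apply Prod.ext
      · show cs.simple j * (cs.wordProd ω * t * (cs.wordProd ω)⁻¹) * cs.simple j =
          cs.simple j * cs.wordProd ω * t * (cs.simple j * cs.wordProd ω)⁻¹
        rw [mul_inv_rev, cs.inv_simple]
        group
      · dsimp only
        by_cases ht : (cs.wordProd ω)⁻¹ * cs.simple j * cs.wordProd ω = t
        · rw [if_pos (by rw [← ht]; group)]
          simp only [beq_iff_eq, ht, if_pos rfl]
          simp [pow_succ, mul_neg]
        · rw [if_neg (fun h => ht (by rw [← h]; group))]
          simp only [beq_iff_eq, if_neg ht, add_zero]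

private lemma prod_map_sgnPerm_alt (i i' : B) (k : ℕ) :
    ((alternatingWord i i' (2 * k)).map (sgnPerm cs)).prod =
      (sgnPerm cs i * sgnPerm cs i') ^ k := by
  induction k with
  | zero => simp [alternatingWord]
  | succ n ih =>
      have h : 2 * (n + 1) = (2 * n + 1) + 1 := by ring
      rw [h, alternatingWord_succ', alternatingWord_succ']
      have h1 : ¬ Even (2 * n + 1) := by simp [Nat.even_add_one]
      have h2 : Even (2 * n) := ⟨n, two_mul n⟩
      rw [if_neg h1, if_pos h2, List.map_cons, List.map_cons, List.prod_cons, List.prod_cons, ih,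
        pow_succ', mul_assoc]

private lemma sgnPerm_liftable : M.IsLiftable (sgnPerm cs) := by
  classical
  intro i i'
  apply Equiv.ext
  rintro ⟨t, e⟩
  rw [← prod_map_sgnPerm_alt cs i i', prod_sgnPerm_apply]
  have h1 : cs.wordProd (alternatingWord i i' (2 * M i i')) = 1 := by
    rw [cs.prod_alternatingWord_eq_mul_pow, if_pos ⟨M i i', two_mul _⟩,
      Nat.mul_div_cancel_left _ (by norm_num), cs.simple_mul_simple_pow, one_mul]
  rw [h1, (even_count_ris_alt cs i i' t).neg_one_pow]
  simp

/-- The sign representation of `W` on `W × ℤˣ`. -/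
private noncomputable def sgnRep : W →* Equiv.Perm (W × ℤˣ) :=
  cs.lift ⟨sgnPerm cs, sgnPerm_liftable cs⟩

private lemma sgnRep_wordProd (ω : List B) :
    sgnRep cs (cs.wordProd ω) = (ω.map (sgnPerm cs)).prod := by
  rw [CoxeterSystem.wordProd, map_list_prod, List.map_map]
  exact congrArg List.prod
    (List.map_congr_left (fun j _ => cs.lift_apply_simple (sgnPerm_liftable cs) j))

private lemma count_ris_parity [DecidableEq W] {ω ω' : List B}
    (h : cs.wordProd ω = cs.wordProd ω') (t : W) :
    ((-1 : ℤˣ)) ^ ((cs.rightInvSeq ω).count t) = (-1) ^ ((cs.rightInvSeq ω').count t) := by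
  have key : (ω.map (sgnPerm cs)).prod (t, 1) = (ω'.map (sgnPerm cs)).prod (t, 1) := by
    rw [← sgnRep_wordProd, ← sgnRep_wordProd, h]
  rw [prod_sgnPerm_apply, prod_sgnPerm_apply] at key
  have := congrArg Prod.snd key
  simpa using this

private lemma simple_mem_ris {ω : List B} (hω : cs.IsReduced ω) {i : B}
    (h : cs.IsRightDescent (cs.wordProd ω) i) : cs.simple i ∈ cs.rightInvSeq ω := by
  classical
  obtain ⟨σ, hσred, hσ⟩ := cs.exists_reduced_word' (cs.wordProd ω * cs.simple i)
  have hprod : cs.wordProd (σ.concat i) = cs.wordProd ω := by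
    rw [cs.wordProd_concat, ← hσ, cs.simple_mul_simple_cancel_right]
  have hcount0 : (cs.rightInvSeq σ).count (cs.simple i) = 0 := by
    rw [List.count_eq_zero]
    intro hmem
    have hinv := (cs.isRightInversion_of_mem_rightInvSeq hσred hmem).2
    rw [← hσ, cs.simple_mul_simple_cancel_right] at hinv
    exact absurd h (Nat.lt_asymm hinv)
  have hcount1 : (cs.rightInvSeq (σ.concat i)).count (cs.simple i) = 1 := by
    rw [cs.rightInvSeq_concat, List.concat_eq_append, List.count_append, List.count_singleton]
    have : (List.map (MulAut.conj (cs.simple i)) (cs.rightInvSeq σ)).count (cs.simple i) = 0 := by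
      rw [List.count_eq_zero]
      intro hmem
      obtain ⟨t, htmem, hteq⟩ := List.mem_map.mp hmem
      have hsi : (MulAut.conj (cs.simple i)) (cs.simple i) = cs.simple i := by simp
      have : t = cs.simple i := (MulAut.conj (cs.simple i)).injective (hteq.trans hsi.symm)
      rw [this] at htmem
      exact absurd htmem (List.count_eq_zero.mp hcount0)
    rw [this, zero_add]
    simp
  by_contra hnot
  have h0 : (cs.rightInvSeq ω).count (cs.simple i) = 0 := List.count_eq_zero.mpr hnot
  have := count_ris_parity cs hprod.symm (cs.simple i)
  rw [h0, hcount1, pow_zero, pow_one] at this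
  exact absurd this.symm (by decide)

/-- The (right) exchange property of Coxeter systems. -/
private lemma exchange {ω : List B} (hω : cs.IsReduced ω) {i : B}
    (h : cs.IsRightDescent (cs.wordProd ω) i) :
    ∃ j, j < ω.length ∧ cs.wordProd ω * cs.simple i = cs.wordProd (ω.eraseIdx j) := by
  have hmem := simple_mem_ris cs hω h
  obtain ⟨j, hj, hget⟩ := List.mem_iff_getElem.mp hmem
  rw [cs.length_rightInvSeq] at hj
  refine ⟨j, hj, ?_⟩
  have hh := cs.wordProd_mul_getD_rightInvSeq ω j
  rw [List.getD_eq_getElem _ 1 (by rw [cs.length_rightInvSeq]; exact hj), hget] at hh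
  exact hh

/-- The element `u * (u⁻¹ ↓ U_ω)` is represented by a reduced subword of `ω`. -/
private lemma exists_reduced_sublist (u : W) (ω : List B) :
    ∃ ω' : List B, ω'.Sublist ω ∧ cs.IsReduced ω' ∧
      cs.wordProd ω' = u * downRWord cs u⁻¹ ω := by
  induction ω using List.reverseRecOn with
  | nil =>
      refine ⟨[], List.Sublist.refl _, ?_, ?_⟩
      · simp [CoxeterSystem.IsReduced]
      · simp [downRWord]
  | append_singleton σ i ih =>
      obtain ⟨σ', hsub, hred, hprod⟩ := ih
      have hd : downRWord cs u⁻¹ (σ ++ [i]) =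
          (if cs.length (downRWord cs u⁻¹ σ * cs.simple i) < cs.length (downRWord cs u⁻¹ σ)
           then downRWord cs u⁻¹ σ * cs.simple i else downRWord cs u⁻¹ σ) := by
        unfold downRWord
        exact List.foldl_append ..
      by_cases hlt :
          cs.length (downRWord cs u⁻¹ σ * cs.simple i) < cs.length (downRWord cs u⁻¹ σ)
      · rw [hd, if_pos hlt]
        by_cases hdesc : cs.IsRightDescent (cs.wordProd σ') i
        · obtain ⟨j, hj, hej⟩ := exchange cs hred hdesc
          refine ⟨σ'.eraseIdx j,
            ((σ'.eraseIdx_sublist j).trans hsub).trans (σ.sublist_append_left [i]), ?_, ?_⟩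
          · have hlen : cs.length (cs.wordProd σ' * cs.simple i) + 1 = cs.length (cs.wordProd σ')
              := by
              rcases cs.length_mul_simple (cs.wordProd σ') i with hc | hc
              · exact absurd hdesc (by rw [CoxeterSystem.IsRightDescent, hc]; omega)
              · exact hc
            have hred' := hred
            rw [CoxeterSystem.IsReduced] at hred' ⊢
            rw [← hej]
            have hE := List.length_eraseIdx_add_one hj
            omega
          · rw [← hej, hprod, mul_assoc]
        · refine ⟨σ' ++ [i], hsub.append (List.Sublist.refl [i]), ?_, ?_⟩
          · rw [CoxeterSystem.IsReduced, cs.wordProd_append, cs.wordProd_singleton,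
              (cs.not_isRightDescent_iff).mp hdesc, List.length_append]
            rw [CoxeterSystem.IsReduced] at hred
            simp [hred]
          · rw [cs.wordProd_append, cs.wordProd_singleton, hprod, mul_assoc]
      · rw [hd, if_neg hlt]
        exact ⟨σ', hsub.trans (σ.sublist_append_left [i]), hred, hprod⟩

end ExchangeTheory


/-- For any `u, w` one has `u (u⁻¹ ↓ U_w) ≤ w` in the strong Bruhat order. -/
theorem stmt8 [Finite W] (u w : W) : BruhatLE cs (u * downR cs u⁻¹ w) w := by
  obtain ⟨ω', hsub, hred, hprod⟩ := exists_reduced_sublist cs u (rword cs w)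
  exact ⟨rword cs w, rword_isReduced cs w, rword_wordProd cs w, ω', hsub, hred, hprod⟩

end PaperBase
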